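/- Fix m, n ≥ 1. A signed partial matching σ ∈ SPM(m,n) satisfies (a) σ†(i) ≤_SPM σ†(i+1) for all 1 ≤ i ≤ m−1 and (b) σ_†(j) ≤_SPM σ_†(j+1) for all 1 ≤ j ≤ n−1 if and only if σ = σ_{i,j} for some integers i, j ≥ 0 with i + j ≤ min(m,n). -/
import Mathlib


/-- A finset `s ⊆ ℤ × ℤ` is (the graph of) a signed partial matching `(I, J, μ)` between
`{±1,…,±m}` and `{±1,…,±n}`. -/
def IsSignedPM (m n : ℕ) (s : Finset (ℤ × ℤ)) : Prop :=
  (∀ p ∈ s, (1 ≤ |p.1| ∧ |p.1| ≤ (m : ℤ)) ∧ (1 ≤ |p.2| ∧ |p.2| ≤ (n : ℤ))) ∧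
  (∀ p ∈ s, ∀ q ∈ s, p.1 = q.1 ↔ p.2 = q.2) ∧
  (∀ p ∈ s, (-p.1, -p.2) ∈ s)

/-- The order-preserving enumeration of the totally ordered set
`{0 < 1 < ⋯ < n < -n < -(n-1) < ⋯ < -1}`: `0 ↦ 0`, `j ↦ j` for `1 ≤ j ≤ n`,
`-i ↦ 2n+1-i` for `1 ≤ i ≤ n`. -/
def ordN (n : ℕ) (j : ℤ) : ℕ :=
  if 0 ≤ j then j.toNat else 2 * n + 1 - (-j).toNat

/-- The order-preserving enumeration of the totally ordered set
`{1 < ⋯ < m < ∞ < -m < ⋯ < -1}` (with `∞ ↦ m+1`): `i ↦ i` for `1 ≤ i ≤ m`,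
`-i ↦ 2m+2-i` for `1 ≤ i ≤ m`. -/
def ordM (m : ℕ) (i : ℤ) : ℕ :=
  if 0 < i then i.toNat else 2 * m + 2 - (-i).toNat

/-- `σ†(i) ∈ {0, ±1,…,±n}` for `1 ≤ i ≤ m`, encoded via `ordN`: `σ†(i) = μ(i)` if
`i ∈ I` and `σ†(i) = 0` otherwise. -/
def spmSharp (n : ℕ) (s : Finset (ℤ × ℤ)) (i : ℕ) : ℕ :=
  ∑ p ∈ s.filter (fun p => p.1 = (i : ℤ)), ordN n p.2

/-- `σ_†(j) ∈ {±1,…,±m, ∞}` for `1 ≤ j ≤ n`, encoded via `ordM` (so `∞` is encoded as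
`m+1`): `σ_†(j) = μ⁻¹(j)` if `j ∈ J` and `σ_†(j) = ∞` otherwise. -/
def spmDag (m : ℕ) (s : Finset (ℤ × ℤ)) (j : ℕ) : ℕ :=
  if (s.filter fun p => p.2 = (j : ℤ)).Nonempty then
    ∑ p ∈ s.filter (fun p => p.2 = (j : ℤ)), ordM m p.1
  else m + 1


section Helpers
variable {m n : ℕ} {s : Finset (ℤ × ℤ)}

lemma uniq1 (hs : IsSignedPM m n s) {a b b' : ℤ} (h : (a, b) ∈ s) (h' : (a, b') ∈ s) :
    b = b' := (hs.2.1 _ h _ h').mp rfl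

lemma uniq2 (hs : IsSignedPM m n s) {a a' b : ℤ} (h : (a, b) ∈ s) (h' : (a', b) ∈ s) :
    a = a' := (hs.2.1 _ h _ h').mpr rfl

lemma neg_mem (hs : IsSignedPM m n s) {a b : ℤ} (h : (a, b) ∈ s) : (-a, -b) ∈ s :=
  hs.2.2 _ h

lemma bnd1 (hs : IsSignedPM m n s) {a b : ℤ} (h : (a, b) ∈ s) :
    1 ≤ |a| ∧ |a| ≤ (m : ℤ) := (hs.1 _ h).1

lemma bnd2 (hs : IsSignedPM m n s) {a b : ℤ} (h : (a, b) ∈ s) :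
    1 ≤ |b| ∧ |b| ≤ (n : ℤ) := (hs.1 _ h).2

lemma filter1_eq (hs : IsSignedPM m n s) {a b : ℤ} (h : (a, b) ∈ s) :
    s.filter (fun p => p.1 = a) = {(a, b)} := by
  apply Finset.eq_singleton_iff_unique_mem.mpr
  refine ⟨Finset.mem_filter.mpr ⟨h, rfl⟩, fun p hp => ?_⟩
  obtain ⟨p1, p2⟩ := p
  have h1 : (p1, p2) ∈ s := (Finset.mem_filter.mp hp).1
  have h2 : p1 = a := (Finset.mem_filter.mp hp).2
  subst h2
  exact Prod.ext rfl (uniq1 hs h1 h)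

lemma filter2_eq (hs : IsSignedPM m n s) {a b : ℤ} (h : (a, b) ∈ s) :
    s.filter (fun p => p.2 = b) = {(a, b)} := by
  apply Finset.eq_singleton_iff_unique_mem.mpr
  refine ⟨Finset.mem_filter.mpr ⟨h, rfl⟩, fun p hp => ?_⟩
  obtain ⟨p1, p2⟩ := p
  have h1 : (p1, p2) ∈ s := (Finset.mem_filter.mp hp).1
  have h2 : p2 = b := (Finset.mem_filter.mp hp).2
  subst h2
  exact Prod.ext (uniq2 hs h1 h) rfl

lemma spmSharp_eq (hs : IsSignedPM m n s) {i : ℕ} {b : ℤ} (h : ((i : ℤ), b) ∈ s) :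
    spmSharp n s i = ordN n b := by
  rw [spmSharp, filter1_eq hs h, Finset.sum_singleton]

lemma spmSharp_eq_zero {i : ℕ} (h : ∀ b : ℤ, ((i : ℤ), b) ∉ s) :
    spmSharp n s i = 0 := by
  rw [spmSharp, Finset.filter_false_of_mem, Finset.sum_empty]
  rintro ⟨a, b⟩ hp h1
  simp only at h1
  exact h b (h1 ▸ hp)

lemma spmDag_eq (hs : IsSignedPM m n s) {j : ℕ} {a : ℤ} (h : (a, (j : ℤ)) ∈ s) :
    spmDag m s j = ordM m a := by
  rw [spmDag, if_pos, filter2_eq hs h, Finset.sum_singleton]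
  exact ⟨(a, (j : ℤ)), Finset.mem_filter.mpr ⟨h, rfl⟩⟩

lemma spmDag_eq_unmatched {j : ℕ} (h : ∀ a : ℤ, (a, (j : ℤ)) ∉ s) :
    spmDag m s j = m + 1 := by
  rw [spmDag, if_neg]
  rintro ⟨⟨a, b⟩, hp⟩
  obtain ⟨hp, h2⟩ := Finset.mem_filter.mp hp
  simp only at h2
  exact h a (h2 ▸ hp)

lemma ordN_pos {b : ℤ} (hb : 1 ≤ b) (hb' : b ≤ (n : ℤ)) : ordN n b = b.toNat := by
  rw [ordN, if_pos (by omega)]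

lemma ordN_neg {b : ℤ} (hb : 1 ≤ -b) (hb' : -b ≤ (n : ℤ)) :
    ordN n b = 2 * n + 1 - (-b).toNat := by
  rw [ordN, if_neg (by omega)]

lemma ordM_pos {a : ℤ} (ha : 1 ≤ a) (ha' : a ≤ (m : ℤ)) : ordM m a = a.toNat := by
  rw [ordM, if_pos (by omega)]

lemma ordM_neg {a : ℤ} (ha : 1 ≤ -a) (ha' : -a ≤ (m : ℤ)) :
    ordM m a = 2 * m + 2 - (-a).toNat := by
  rw [ordM, if_neg (by omega)]

end Helpers


/-- The signed partial matching `σ_{i,j}` (with `ℓ = i + j ≤ min(m,n)`):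
`I⁺ = {m-ℓ+1,…,m}`, `J⁺ = {1,…,i} ∪ {-n,…,-(n-j+1)}`, the restriction
`μ⁺ : I⁺ → J⁺` is the unique `<_SPM`-increasing bijection (so `μ(m-ℓ+t) = t` for
`1 ≤ t ≤ i` and `μ(m-ℓ+i+u) = -(n-u+1)` for `1 ≤ u ≤ j`), extended by
`μ(-a) = -μ(a)`. -/
def sigmaIJ (m n i j : ℕ) : Finset (ℤ × ℤ) :=
  ((Finset.Icc 1 i).image fun t : ℕ =>
    (((m : ℤ) - ((i : ℤ) + (j : ℤ)) + (t : ℤ)), (t : ℤ))) ∪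
  ((Finset.Icc 1 j).image fun u : ℕ =>
    (((m : ℤ) - ((i : ℤ) + (j : ℤ)) + (i : ℤ) + (u : ℤ)), -((n : ℤ) - (u : ℤ) + 1))) ∪
  ((Finset.Icc 1 i).image fun t : ℕ =>
    (-(((m : ℤ) - ((i : ℤ) + (j : ℤ)) + (t : ℤ))), -(t : ℤ))) ∪
  ((Finset.Icc 1 j).image fun u : ℕ =>
    (-(((m : ℤ) - ((i : ℤ) + (j : ℤ)) + (i : ℤ) + (u : ℤ))), ((n : ℤ) - (u : ℤ) + 1)))

lemma mem_sigmaIJ {m n i j : ℕ} {p : ℤ × ℤ} :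
    p ∈ sigmaIJ m n i j ↔
      (∃ t : ℕ, (1 ≤ t ∧ t ≤ i) ∧ ((m : ℤ) - ((i:ℤ) + (j:ℤ)) + (t:ℤ), (t : ℤ)) = p) ∨
      (∃ u : ℕ, (1 ≤ u ∧ u ≤ j) ∧
        ((m : ℤ) - ((i:ℤ) + (j:ℤ)) + (i:ℤ) + (u:ℤ), -((n:ℤ) - (u:ℤ) + 1)) = p) ∨
      (∃ t : ℕ, (1 ≤ t ∧ t ≤ i) ∧ (-((m : ℤ) - ((i:ℤ) + (j:ℤ)) + (t:ℤ)), -(t : ℤ)) = p) ∨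
      (∃ u : ℕ, (1 ≤ u ∧ u ≤ j) ∧
        (-((m : ℤ) - ((i:ℤ) + (j:ℤ)) + (i:ℤ) + (u:ℤ)), (n:ℤ) - (u:ℤ) + 1) = p) := by
  simp only [sigmaIJ, Finset.mem_union, Finset.mem_image, Finset.mem_Icc, or_assoc]

section Rev
variable {m n i j : ℕ}

lemma sharp_zero (hmn : i + j ≤ m) {a : ℕ} (h1 : 1 ≤ a) (h2 : a ≤ m - (i + j)) :
    spmSharp n (sigmaIJ m n i j) a = 0 := by
  apply spmSharp_eq_zero
  intro b hb
  rcases mem_sigmaIJ.mp hb with ⟨t, ht, he⟩ | ⟨u, hu, he⟩ | ⟨t, ht, he⟩ | ⟨u, hu, he⟩ <;>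
    (have := congrArg Prod.fst he; simp only at this; omega)

lemma sharp_A (hs : IsSignedPM m n (sigmaIJ m n i j)) (hmn : i + j ≤ m) {a : ℕ}
    (h1 : m - (i + j) < a) (h2 : a ≤ m - (i + j) + i) :
    spmSharp n (sigmaIJ m n i j) a = a - (m - (i + j)) := by
  obtain ⟨t, ht, hta⟩ : ∃ t : ℕ, (1 ≤ t ∧ t ≤ i) ∧ a = m - (i + j) + t ∧
      t = a - (m - (i + j)) := ⟨a - (m - (i + j)), ⟨by omega, by omega⟩, by omega, rfl⟩
  have hmem : ((a : ℤ), (t : ℤ)) ∈ sigmaIJ m n i j := by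
    apply mem_sigmaIJ.mpr
    exact Or.inl ⟨t, ht, by simp only [Prod.mk.injEq, and_true, true_and]; omega⟩
  rw [spmSharp_eq hs hmem, ordN, if_pos (by positivity), Int.toNat_natCast]
  omega

lemma sharp_B (hs : IsSignedPM m n (sigmaIJ m n i j)) (hmn : i + j ≤ m) (hnn : i + j ≤ n)
    {a : ℕ} (h1 : m - (i + j) + i < a) (h2 : a ≤ m) :
    spmSharp n (sigmaIJ m n i j) a = n + (a - (m - (i + j) + i)) := by
  obtain ⟨u, hu, hua⟩ : ∃ u : ℕ, (1 ≤ u ∧ u ≤ j) ∧ a = m - (i + j) + i + u ∧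
      u = a - (m - (i + j) + i) := ⟨a - (m - (i + j) + i), ⟨by omega, by omega⟩, by omega, rfl⟩
  have hmem : ((a : ℤ), -((n : ℤ) - (u : ℤ) + 1)) ∈ sigmaIJ m n i j := by
    apply mem_sigmaIJ.mpr
    refine Or.inr (Or.inl ⟨u, hu, ?_⟩)
    simp only [Prod.mk.injEq, and_true, true_and]; omega
  rw [spmSharp_eq hs hmem, ordN, if_neg (by omega)]
  have : (- -((n : ℤ) - (u : ℤ) + 1)).toNat = n - u + 1 := by omega
  rw [this]; omega

lemma dag_P (hs : IsSignedPM m n (sigmaIJ m n i j)) (hmn : i + j ≤ m) {b : ℕ}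
    (h1 : 1 ≤ b) (h2 : b ≤ i) :
    spmDag m (sigmaIJ m n i j) b = m - (i + j) + b := by
  have hmem : (((m - (i + j) + b : ℕ) : ℤ), (b : ℤ)) ∈ sigmaIJ m n i j := by
    apply mem_sigmaIJ.mpr
    exact Or.inl ⟨b, ⟨h1, h2⟩, by simp only [Prod.mk.injEq, and_true, true_and]; omega⟩
  rw [spmDag_eq hs hmem, ordM, if_pos (by positivity), Int.toNat_natCast]

lemma dag_un (hmn : i + j ≤ n) {b : ℕ} (h1 : i < b) (h2 : b ≤ n - j) :
    spmDag m (sigmaIJ m n i j) b = m + 1 := by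
  apply spmDag_eq_unmatched
  intro a ha
  rcases mem_sigmaIJ.mp ha with ⟨t, ht, he⟩ | ⟨u, hu, he⟩ | ⟨t, ht, he⟩ | ⟨u, hu, he⟩ <;>
    (have := congrArg Prod.snd he; simp only at this; omega)

lemma dag_N (hs : IsSignedPM m n (sigmaIJ m n i j)) (hmn : i + j ≤ m) (hnn : i + j ≤ n)
    {b : ℕ} (h1 : n - j < b) (h2 : b ≤ n) :
    spmDag m (sigmaIJ m n i j) b = m + 1 + j + b - n := by
  obtain ⟨u, hu, hub⟩ : ∃ u : ℕ, (1 ≤ u ∧ u ≤ j) ∧ b = n + 1 - u ∧ u = n + 1 - b :=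
    ⟨n + 1 - b, ⟨by omega, by omega⟩, by omega, rfl⟩
  have hmem : ((-((m : ℤ) - ((i:ℤ)+(j:ℤ)) + (i:ℤ) + (u:ℤ))), (b : ℤ)) ∈ sigmaIJ m n i j := by
    apply mem_sigmaIJ.mpr
    refine Or.inr (Or.inr (Or.inr ⟨u, hu, ?_⟩))
    simp only [Prod.mk.injEq, and_true, true_and]; omega
  rw [spmDag_eq hs hmem, ordM, if_neg (by omega)]
  have : (- -((m : ℤ) - ((i:ℤ)+(j:ℤ)) + (i:ℤ) + (u:ℤ))).toNat = m - (i + j) + i + u := by omega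
  rw [this]; omega

lemma reverse_dir (hs : IsSignedPM m n (sigmaIJ m n i j)) (hmn : i + j ≤ m) (hnn : i + j ≤ n) :
    (∀ a : ℕ, 1 ≤ a → a + 1 ≤ m → spmSharp n (sigmaIJ m n i j) a ≤
      spmSharp n (sigmaIJ m n i j) (a + 1)) ∧
    (∀ b : ℕ, 1 ≤ b → b + 1 ≤ n → spmDag m (sigmaIJ m n i j) b ≤
      spmDag m (sigmaIJ m n i j) (b + 1)) := by
  constructor
  · intro a ha ham
    rcases le_or_gt a (m - (i+j)) with h|h
    · rw [sharp_zero hmn ha h]; omega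
    rcases le_or_gt a (m - (i+j) + i) with h'|h'
    · rw [sharp_A hs hmn h h']
      rcases le_or_gt (a+1) (m - (i+j) + i) with h''|h''
      · rw [sharp_A hs hmn (by omega) h'']; omega
      · rw [sharp_B hs hmn hnn (by omega) (by omega)]; omega
    · rw [sharp_B hs hmn hnn h' (by omega), sharp_B hs hmn hnn (by omega) (by omega)]; omega
  · intro b hb hbn
    rcases le_or_gt b i with h|h
    · rw [dag_P hs hmn hb h]
      rcases le_or_gt (b+1) i with h''|h''
      · rw [dag_P hs hmn (by omega) h'']; omega
      · rcases le_or_gt (b+1) (n-j) with h3|h3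
        · rw [dag_un hnn (by omega) h3]; omega
        · rw [dag_N hs hmn hnn (by omega) (by omega)]; omega
    rcases le_or_gt b (n - j) with h'|h'
    · rw [dag_un hnn h h']
      rcases le_or_gt (b+1) (n-j) with h3|h3
      · rw [dag_un hnn (by omega) h3]
      · rw [dag_N hs hmn hnn (by omega) (by omega)]; omega
    · rw [dag_N hs hmn hnn h' (by omega), dag_N hs hmn hnn (by omega) (by omega)]; omega

end Rev

section Generic

lemma mono_of_step {f : ℕ → ℕ} {m : ℕ} (h : ∀ a, 1 ≤ a → a + 1 ≤ m → f a ≤ f (a + 1)) :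
    ∀ a b, 1 ≤ a → a ≤ b → b ≤ m → f a ≤ f b := by
  intro a b ha hab hbm
  induction b with
  | zero => omega
  | succ b ih =>
    rcases Nat.eq_or_lt_of_le hab with rfl | h'
    · exact le_rfl
    · exact le_trans (ih (by omega) (by omega)) (h b (by omega) (by omega))

lemma downset_eq_Icc {N : ℕ} {t : Finset ℕ} (ht : t ⊆ Finset.Icc 1 N)
    (hd : ∀ b ∈ t, ∀ b', 1 ≤ b' → b' ≤ b → b' ∈ t) : t = Finset.Icc 1 t.card := by
  ext b
  simp only [Finset.mem_Icc]
  constructor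
  · intro hb
    have h1 := Finset.mem_Icc.mp (ht hb)
    have h2 : Finset.Icc 1 b ⊆ t := fun x hx =>
      hd b hb x (Finset.mem_Icc.mp hx).1 (Finset.mem_Icc.mp hx).2
    have := Finset.card_le_card h2
    rw [Nat.card_Icc] at this
    omega
  · intro hb
    by_contra hbt
    have h2 : t ⊆ Finset.Icc 1 (b - 1) := by
      intro x hx
      have hx1 := Finset.mem_Icc.mp (ht hx)
      refine Finset.mem_Icc.mpr ⟨hx1.1, ?_⟩
      by_contra hxb
      exact hbt (hd x hx b (by omega) (by omega))
    have := Finset.card_le_card h2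
    rw [Nat.card_Icc] at this
    omega

lemma upset_eq_Icc {N : ℕ} {t : Finset ℕ} (ht : t ⊆ Finset.Icc 1 N)
    (hd : ∀ b ∈ t, ∀ b', b ≤ b' → b' ≤ N → b' ∈ t) : t = Finset.Icc (N + 1 - t.card) N := by
  ext b
  simp only [Finset.mem_Icc]
  constructor
  · intro hb
    have h1 := Finset.mem_Icc.mp (ht hb)
    have h2 : Finset.Icc b N ⊆ t := fun x hx =>
      hd b hb x (Finset.mem_Icc.mp hx).1 (Finset.mem_Icc.mp hx).2
    have := Finset.card_le_card h2
    rw [Nat.card_Icc] at this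
    omega
  · intro hb
    by_contra hbt
    have h2 : t ⊆ Finset.Icc (b + 1) N := by
      intro x hx
      have hx1 := Finset.mem_Icc.mp (ht hx)
      refine Finset.mem_Icc.mpr ⟨?_, hx1.2⟩
      by_contra hxb
      exact hbt (hd x hx b (by omega) (by omega))
    have := Finset.card_le_card h2
    rw [Nat.card_Icc] at this
    omega

end Generic

section Cards
attribute [local instance] Classical.propDecidable
variable {m n : ℕ} {s : Finset (ℤ × ℤ)}

lemma bnd1o (hs : IsSignedPM m n s) {a b : ℤ} (h : (a, b) ∈ s) :
    (1 ≤ a ∧ a ≤ (m : ℤ)) ∨ (a ≤ -1 ∧ -a ≤ (m : ℤ)) := by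
  have h1 := bnd1 hs h
  rcases abs_cases a with ⟨he, _⟩ | ⟨he, _⟩ <;> rw [he] at h1 <;> omega

lemma bnd2o (hs : IsSignedPM m n s) {a b : ℤ} (h : (a, b) ∈ s) :
    (1 ≤ b ∧ b ≤ (n : ℤ)) ∨ (b ≤ -1 ∧ -b ≤ (n : ℤ)) := by
  have h1 := bnd2 hs h
  rcases abs_cases b with ⟨he, _⟩ | ⟨he, _⟩ <;> rw [he] at h1 <;> omega

lemma cardA (hs : IsSignedPM m n s) :
    (s.filter fun p => 0 < p.1 ∧ 0 < p.2).card =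
      ((Finset.Icc 1 m).filter fun a : ℕ => ∃ b : ℤ, 0 < b ∧ ((a : ℤ), b) ∈ s).card := by
  apply Finset.card_bij (fun p _ => p.1.toNat)
  · intro p hp
    obtain ⟨hp, ha, hb⟩ := Finset.mem_filter.mp hp
    have h1 := bnd1o hs (show (p.1, p.2) ∈ s from hp)
    refine Finset.mem_filter.mpr ⟨Finset.mem_Icc.mpr ⟨by omega, by omega⟩, p.2, hb, ?_⟩
    rw [Int.toNat_of_nonneg (by omega)]
    exact hp
  · intro p hp q hq he
    obtain ⟨hp, ha, hb⟩ := Finset.mem_filter.mp hp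
    obtain ⟨hq, ha', hb'⟩ := Finset.mem_filter.mp hq
    have haa : p.1 = q.1 := by omega
    exact Prod.ext haa (uniq1 hs (show (p.1, p.2) ∈ s from hp)
      (show (p.1, q.2) ∈ s from haa ▸ hq))
  · intro a ha
    obtain ⟨hIcc, b, hb, hmem⟩ := Finset.mem_filter.mp ha
    have h1 := Finset.mem_Icc.mp hIcc
    exact ⟨((a : ℤ), b), Finset.mem_filter.mpr ⟨hmem, by simp; omega, hb⟩, by simp⟩

lemma cardP (hs : IsSignedPM m n s) :
    (s.filter fun p => 0 < p.1 ∧ 0 < p.2).card =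
      ((Finset.Icc 1 n).filter fun b : ℕ => ∃ a : ℤ, 0 < a ∧ (a, (b : ℤ)) ∈ s).card := by
  apply Finset.card_bij (fun p _ => p.2.toNat)
  · intro p hp
    obtain ⟨hp, ha, hb⟩ := Finset.mem_filter.mp hp
    have h1 := bnd2o hs (show (p.1, p.2) ∈ s from hp)
    refine Finset.mem_filter.mpr ⟨Finset.mem_Icc.mpr ⟨by omega, by omega⟩, p.1, ha, ?_⟩
    rw [Int.toNat_of_nonneg (by omega)]
    exact hp
  · intro p hp q hq he
    obtain ⟨hp, ha, hb⟩ := Finset.mem_filter.mp hp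
    obtain ⟨hq, ha', hb'⟩ := Finset.mem_filter.mp hq
    have hbb : p.2 = q.2 := by omega
    exact Prod.ext (uniq2 hs (show (p.1, p.2) ∈ s from hp)
      (show (q.1, p.2) ∈ s from hbb ▸ hq)) hbb
  · intro b hb
    obtain ⟨hIcc, a, ha, hmem⟩ := Finset.mem_filter.mp hb
    have h1 := Finset.mem_Icc.mp hIcc
    exact ⟨(a, (b : ℤ)), Finset.mem_filter.mpr ⟨hmem, ha, by simp; omega⟩, by simp⟩

lemma cardB (hs : IsSignedPM m n s) :
    (s.filter fun p => 0 < p.1 ∧ p.2 < 0).card =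
      ((Finset.Icc 1 m).filter fun a : ℕ => ∃ b : ℤ, b < 0 ∧ ((a : ℤ), b) ∈ s).card := by
  apply Finset.card_bij (fun p _ => p.1.toNat)
  · intro p hp
    obtain ⟨hp, ha, hb⟩ := Finset.mem_filter.mp hp
    have h1 := bnd1o hs (show (p.1, p.2) ∈ s from hp)
    refine Finset.mem_filter.mpr ⟨Finset.mem_Icc.mpr ⟨by omega, by omega⟩, p.2, hb, ?_⟩
    rw [Int.toNat_of_nonneg (by omega)]
    exact hp
  · intro p hp q hq he
    obtain ⟨hp, ha, hb⟩ := Finset.mem_filter.mp hp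
    obtain ⟨hq, ha', hb'⟩ := Finset.mem_filter.mp hq
    have haa : p.1 = q.1 := by omega
    exact Prod.ext haa (uniq1 hs (show (p.1, p.2) ∈ s from hp)
      (show (p.1, q.2) ∈ s from haa ▸ hq))
  · intro a ha
    obtain ⟨hIcc, b, hb, hmem⟩ := Finset.mem_filter.mp ha
    have h1 := Finset.mem_Icc.mp hIcc
    exact ⟨((a : ℤ), b), Finset.mem_filter.mpr ⟨hmem, by simp; omega, hb⟩, by simp⟩

lemma cardN (hs : IsSignedPM m n s) :
    (s.filter fun p => 0 < p.1 ∧ p.2 < 0).card =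
      ((Finset.Icc 1 n).filter fun b : ℕ => ∃ a : ℤ, a < 0 ∧ (a, (b : ℤ)) ∈ s).card := by
  apply Finset.card_bij (fun p _ => (-p.2).toNat)
  · intro p hp
    obtain ⟨hp, ha, hb⟩ := Finset.mem_filter.mp hp
    have h1 := bnd2o hs (show (p.1, p.2) ∈ s from hp)
    refine Finset.mem_filter.mpr ⟨Finset.mem_Icc.mpr ⟨by omega, by omega⟩, -p.1, by omega, ?_⟩
    have h2 : (((-p.2).toNat : ℤ)) = -p.2 := Int.toNat_of_nonneg (by omega)
    rw [h2]
    exact neg_mem hs (show (p.1, p.2) ∈ s from hp)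
  · intro p hp q hq he
    obtain ⟨hp, ha, hb⟩ := Finset.mem_filter.mp hp
    obtain ⟨hq, ha', hb'⟩ := Finset.mem_filter.mp hq
    have hbb : p.2 = q.2 := by omega
    exact Prod.ext (uniq2 hs (show (p.1, p.2) ∈ s from hp)
      (show (q.1, p.2) ∈ s from hbb ▸ hq)) hbb
  · intro b hb
    obtain ⟨hIcc, a, ha, hmem⟩ := Finset.mem_filter.mp hb
    have h1 := Finset.mem_Icc.mp hIcc
    refine ⟨(-a, -(b : ℤ)), Finset.mem_filter.mpr
      ⟨neg_mem hs hmem, by simp; omega, by simp; omega⟩, by simp⟩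

end Cards

section Forward
attribute [local instance] Classical.propDecidable
variable {m n : ℕ} {s : Finset (ℤ × ℤ)}

lemma forward_dir (hs : IsSignedPM m n s)
    (ha : ∀ i : ℕ, 1 ≤ i → i + 1 ≤ m → spmSharp n s i ≤ spmSharp n s (i + 1))
    (hb : ∀ j : ℕ, 1 ≤ j → j + 1 ≤ n → spmDag m s j ≤ spmDag m s (j + 1)) :
    ∃ i j : ℕ, i + j ≤ m ∧ i + j ≤ n ∧ s = sigmaIJ m n i j := by
  have monoS : ∀ a b, 1 ≤ a → a ≤ b → b ≤ m → spmSharp n s a ≤ spmSharp n s b :=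
    mono_of_step ha
  have monoD : ∀ a b, 1 ≤ a → a ≤ b → b ≤ n → spmDag m s a ≤ spmDag m s b :=
    mono_of_step hb
  -- value facts for spmDag
  have dag_val_pos : ∀ (b : ℕ) (a : ℤ), 0 < a → (a, (b : ℤ)) ∈ s →
      spmDag m s b = a.toNat ∧ 1 ≤ a.toNat ∧ a.toNat ≤ m := by
    intro b a h0 hmem
    have h1 := bnd1o hs hmem
    rw [spmDag_eq hs hmem, ordM, if_pos h0]
    omega
  have dag_val_neg : ∀ (b : ℕ) (a : ℤ), a < 0 → (a, (b : ℤ)) ∈ s →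
      spmDag m s b = 2 * m + 2 - (-a).toNat ∧ m + 2 ≤ spmDag m s b := by
    intro b a h0 hmem
    have h1 := bnd1o hs hmem
    rw [spmDag_eq hs hmem, ordM, if_neg (by omega)]
    omega
  have dag_low : ∀ b : ℕ, spmDag m s b ≤ m → ∃ a : ℤ, 0 < a ∧ (a, (b : ℤ)) ∈ s := by
    intro b hle
    by_cases hmatch : ∃ a : ℤ, (a, (b : ℤ)) ∈ s
    · obtain ⟨a, hmem⟩ := hmatch
      rcases lt_trichotomy a 0 with h | h | h
      · have := dag_val_neg b a h hmem; omega
      · exfalso; have h2 := bnd1 hs hmem; rw [h] at h2; simp at h2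
      · exact ⟨a, h, hmem⟩
    · push_neg at hmatch
      rw [spmDag_eq_unmatched hmatch] at hle; omega
  have dag_high : ∀ b : ℕ, m + 2 ≤ spmDag m s b → ∃ a : ℤ, a < 0 ∧ (a, (b : ℤ)) ∈ s := by
    intro b hle
    by_cases hmatch : ∃ a : ℤ, (a, (b : ℤ)) ∈ s
    · obtain ⟨a, hmem⟩ := hmatch
      rcases lt_trichotomy a 0 with h | h | h
      · exact ⟨a, h, hmem⟩
      · exfalso; have h2 := bnd1 hs hmem; rw [h] at h2; simp at h2
      · have := dag_val_pos b a h hmem; omega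
    · push_neg at hmatch
      rw [spmDag_eq_unmatched hmatch] at hle; omega
  -- the sets P and Nn
  set P := (Finset.Icc 1 n).filter (fun b : ℕ => ∃ a : ℤ, 0 < a ∧ (a, (b : ℤ)) ∈ s) with hPdef
  set Nn := (Finset.Icc 1 n).filter (fun b : ℕ => ∃ a : ℤ, a < 0 ∧ (a, (b : ℤ)) ∈ s) with hNdef
  set i0 := P.card with hi0
  set j0 := Nn.card with hj0
  have hP : P = Finset.Icc 1 i0 := by
    apply downset_eq_Icc (Finset.filter_subset _ _)
    intro b hbP b' h1 h2
    obtain ⟨hbI, a, h0, hmem⟩ := Finset.mem_filter.mp hbP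
    have hbn := (Finset.mem_Icc.mp hbI).2
    have hv := dag_val_pos b a h0 hmem
    have hmono := monoD b' b h1 h2 hbn
    obtain ⟨a', h0', hmem'⟩ := dag_low b' (by omega)
    exact Finset.mem_filter.mpr ⟨Finset.mem_Icc.mpr ⟨h1, by omega⟩, a', h0', hmem'⟩
  have hN : Nn = Finset.Icc (n + 1 - j0) n := by
    apply upset_eq_Icc (Finset.filter_subset _ _)
    intro b hbN b' h1 h2
    obtain ⟨hbI, a, h0, hmem⟩ := Finset.mem_filter.mp hbN
    have hb1 := (Finset.mem_Icc.mp hbI).1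
    have hv := dag_val_neg b a h0 hmem
    have hmono := monoD b b' hb1 h1 h2
    obtain ⟨a', h0', hmem'⟩ := dag_high b' (by omega)
    exact Finset.mem_filter.mpr ⟨Finset.mem_Icc.mpr ⟨by omega, h2⟩, a', h0', hmem'⟩
  have hijn : i0 + j0 ≤ n := by
    have hdis : Disjoint P Nn := by
      rw [Finset.disjoint_left]
      intro b h1 h2
      obtain ⟨_, a, h0, hmem⟩ := Finset.mem_filter.mp h1
      obtain ⟨_, a', h0', hmem'⟩ := Finset.mem_filter.mp h2
      have := uniq2 hs hmem hmem'
      omega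
    have hsub : P ∪ Nn ⊆ Finset.Icc 1 n :=
      Finset.union_subset (Finset.filter_subset _ _) (Finset.filter_subset _ _)
    have hcard := Finset.card_le_card hsub
    rw [Finset.card_union_of_disjoint hdis, Nat.card_Icc] at hcard
    omega
  -- value facts for spmSharp
  have sharp_val_pos : ∀ (a : ℕ) (b : ℤ), 0 < b → ((a : ℤ), b) ∈ s →
      spmSharp n s a = b.toNat ∧ 1 ≤ b.toNat ∧ b.toNat ≤ n := by
    intro a b h0 hmem
    have h1 := bnd2o hs hmem
    rw [spmSharp_eq hs hmem, ordN, if_pos (by omega)]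
    omega
  have sharp_val_neg : ∀ (a : ℕ) (b : ℤ), b < 0 → ((a : ℤ), b) ∈ s →
      spmSharp n s a = 2 * n + 1 - (-b).toNat ∧ n + 1 ≤ spmSharp n s a := by
    intro a b h0 hmem
    have h1 := bnd2o hs hmem
    rw [spmSharp_eq hs hmem, ordN, if_neg (by omega)]
    omega
  -- the sets Z and ZA
  set Z := (Finset.Icc 1 m).filter (fun a : ℕ => spmSharp n s a = 0) with hZdef
  set ZA := (Finset.Icc 1 m).filter (fun a : ℕ => spmSharp n s a ≤ n) with hZAdef
  set zc := Z.card with hzc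
  set ac := ZA.card with hac0
  have hZ : Z = Finset.Icc 1 zc := by
    apply downset_eq_Icc (Finset.filter_subset _ _)
    intro a haZ a' h1 h2
    obtain ⟨haI, hv⟩ := Finset.mem_filter.mp haZ
    have ham := (Finset.mem_Icc.mp haI).2
    have := monoS a' a h1 h2 ham
    exact Finset.mem_filter.mpr ⟨Finset.mem_Icc.mpr ⟨h1, by omega⟩, by omega⟩
  have hZA : ZA = Finset.Icc 1 ac := by
    apply downset_eq_Icc (Finset.filter_subset _ _)
    intro a haZ a' h1 h2
    obtain ⟨haI, hv⟩ := Finset.mem_filter.mp haZ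
    have ham := (Finset.mem_Icc.mp haI).2
    have := monoS a' a h1 h2 ham
    exact Finset.mem_filter.mpr ⟨Finset.mem_Icc.mpr ⟨h1, by omega⟩, by omega⟩
  have hzcac : zc ≤ ac := by
    apply Finset.card_le_card
    intro a haZ
    obtain ⟨haI, hv⟩ := Finset.mem_filter.mp haZ
    exact Finset.mem_filter.mpr ⟨haI, by omega⟩
  have hacm : ac ≤ m := by
    have h1 : ZA ⊆ Finset.Icc 1 m := by rw [hZAdef]; exact Finset.filter_subset _ _
    have h2 := Finset.card_le_card h1
    rw [Nat.card_Icc] at h2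
    omega
  -- sets A and B
  set A := (Finset.Icc 1 m).filter (fun a : ℕ => ∃ b : ℤ, 0 < b ∧ ((a : ℤ), b) ∈ s) with hAdef
  set B := (Finset.Icc 1 m).filter (fun a : ℕ => ∃ b : ℤ, b < 0 ∧ ((a : ℤ), b) ∈ s) with hBdef
  have memA : ∀ a : ℕ, a ∈ A ↔ zc + 1 ≤ a ∧ a ≤ ac := by
    intro a
    constructor
    · intro haA
      obtain ⟨haI, b, h0, hmem⟩ := Finset.mem_filter.mp haA
      have hv := sharp_val_pos a b h0 hmem
      have h1 : a ∈ ZA := Finset.mem_filter.mpr ⟨haI, by omega⟩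
      rw [hZA, Finset.mem_Icc] at h1
      have h2 : a ∉ Z := fun hz => by
        have := (Finset.mem_filter.mp hz).2; omega
      rw [hZ, Finset.mem_Icc] at h2
      omega
    · rintro ⟨h1, h2⟩
      have haZA : a ∈ ZA := by rw [hZA, Finset.mem_Icc]; omega
      obtain ⟨haI, hle⟩ := Finset.mem_filter.mp haZA
      have hnZ : a ∉ Z := by rw [hZ, Finset.mem_Icc]; omega
      have hne : spmSharp n s a ≠ 0 := fun h => hnZ (Finset.mem_filter.mpr ⟨haI, h⟩)
      by_cases hmatch : ∃ b : ℤ, ((a : ℤ), b) ∈ s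
      · obtain ⟨b, hmem⟩ := hmatch
        rcases lt_trichotomy b 0 with h | h | h
        · have := sharp_val_neg a b h hmem; omega
        · exfalso; have h2 := bnd2 hs hmem; rw [h] at h2; simp at h2
        · exact Finset.mem_filter.mpr ⟨haI, b, h, hmem⟩
      · push_neg at hmatch
        exact absurd (spmSharp_eq_zero hmatch) hne
  have memB : ∀ a : ℕ, a ∈ B ↔ ac + 1 ≤ a ∧ a ≤ m := by
    intro a
    constructor
    · intro haB
      obtain ⟨haI, b, h0, hmem⟩ := Finset.mem_filter.mp haB
      have hv := sharp_val_neg a b h0 hmem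
      have h1 : a ∉ ZA := fun hz => by
        have := (Finset.mem_filter.mp hz).2; omega
      rw [hZA, Finset.mem_Icc] at h1
      have := Finset.mem_Icc.mp haI
      omega
    · rintro ⟨h1, h2⟩
      have haI : a ∈ Finset.Icc 1 m := Finset.mem_Icc.mpr ⟨by omega, h2⟩
      have hnZA : a ∉ ZA := by rw [hZA, Finset.mem_Icc]; omega
      have hgt : ¬ (spmSharp n s a ≤ n) := fun h => hnZA (Finset.mem_filter.mpr ⟨haI, h⟩)
      by_cases hmatch : ∃ b : ℤ, ((a : ℤ), b) ∈ s
      · obtain ⟨b, hmem⟩ := hmatch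
        rcases lt_trichotomy b 0 with h | h | h
        · exact Finset.mem_filter.mpr ⟨haI, b, h, hmem⟩
        · exfalso; have h2 := bnd2 hs hmem; rw [h] at h2; simp at h2
        · exfalso; have := sharp_val_pos a b h hmem; exact hgt (by omega)
      · push_neg at hmatch
        exfalso
        have h0 : spmSharp n s a = 0 := spmSharp_eq_zero hmatch
        exact hgt (by omega)
  have hcardA : A.card = ac - zc := by
    have : A = Finset.Icc (zc + 1) ac := Finset.ext fun a => by rw [memA, Finset.mem_Icc]
    rw [this, Nat.card_Icc]; omega
  have hcardB : B.card = m - ac := by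
    have : B = Finset.Icc (ac + 1) m := Finset.ext fun a => by rw [memB, Finset.mem_Icc]
    rw [this, Nat.card_Icc]; omega
  have eA : A.card = i0 := (cardA hs).symm.trans (cardP hs)
  have eB : B.card = j0 := (cardB hs).symm.trans (cardN hs)
  have hACeq : ac = zc + i0 := by omega
  have hm_eq : zc + i0 + j0 = m := by omega
  -- exact matched pairs on the A-range
  have hA : ∀ a : ℕ, zc + 1 ≤ a → a ≤ zc + i0 → ∃ b : ℤ, 0 < b ∧ ((a : ℤ), b) ∈ s ∧
      spmSharp n s a = b.toNat ∧ 1 ≤ b.toNat ∧ b.toNat ≤ i0 := by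
    intro a h1 h2
    have haA : a ∈ A := (memA a).mpr ⟨h1, by omega⟩
    obtain ⟨haI, b, h0, hmem⟩ := Finset.mem_filter.mp haA
    obtain ⟨hv1, hv2, hv3⟩ := sharp_val_pos a b h0 hmem
    have hbP : b.toNat ∈ P := by
      refine Finset.mem_filter.mpr ⟨Finset.mem_Icc.mpr ⟨by omega, by omega⟩, (a : ℤ),
        by omega, ?_⟩
      have hcast : ((b.toNat : ℕ) : ℤ) = b := Int.toNat_of_nonneg (by omega)
      rw [hcast]
      exact hmem
    rw [hP, Finset.mem_Icc] at hbP
    exact ⟨b, h0, hmem, hv1, hv2, hbP.2⟩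
  have strictA : ∀ a : ℕ, zc + 1 ≤ a → a + 1 ≤ zc + i0 →
      spmSharp n s a < spmSharp n s (a + 1) := by
    intro a h1 h2
    obtain ⟨b, h0, hmem, hv, _, _⟩ := hA a h1 (by omega)
    obtain ⟨b', h0', hmem', hv', _, _⟩ := hA (a + 1) (by omega) (by omega)
    have hle := ha a (by omega) (by omega)
    rcases eq_or_lt_of_le hle with he | h
    · exfalso
      have hbb : b = b' := by omega
      rw [hbb] at hmem
      have := uniq2 hs hmem hmem'
      omega
    · exact h
  have keyA : ∀ t : ℕ, 1 ≤ t → t ≤ i0 → (((zc + t : ℕ) : ℤ), (t : ℤ)) ∈ s := by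
    have lower : ∀ t : ℕ, 1 ≤ t → t ≤ i0 → t ≤ spmSharp n s (zc + t) := by
      intro t
      induction t with
      | zero => omega
      | succ t ih =>
        intro _ hti
        rcases Nat.eq_zero_or_pos t with rfl | hpos
        · obtain ⟨b, h0, hmem, hv, h1b, _⟩ := hA (zc + 1) le_rfl (by omega)
          show 0 + 1 ≤ spmSharp n s (zc + 1)
          omega
        · have h1 := ih (by omega) (by omega)
          have h2 := strictA (zc + t) (by omega) (by omega)
          show t + 1 ≤ spmSharp n s (zc + t + 1)
          omega
    have upper : ∀ d t : ℕ, 1 ≤ t → t + d = i0 → spmSharp n s (zc + t) + d ≤ i0 := by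
      intro d
      induction d with
      | zero =>
        intro t h1 h2
        obtain ⟨b, _, _, hv, _, hbi⟩ := hA (zc + t) (by omega) (by omega)
        omega
      | succ d ih =>
        intro t h1 h2
        have h3 := ih (t + 1) (by omega) (by omega)
        have h3' : spmSharp n s (zc + t + 1) + d ≤ i0 := h3
        have h4 := strictA (zc + t) (by omega) (by omega)
        omega
    intro t h1 h2
    obtain ⟨b, h0, hmem, hv, _, _⟩ := hA (zc + t) (by omega) (by omega)
    have hl := lower t h1 h2
    have hu := upper (i0 - t) t h1 (by omega)
    have hbb : b = (t : ℤ) := by omega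
    rw [hbb] at hmem
    exact hmem
  -- exact matched pairs on the B-range
  have hB : ∀ a : ℕ, zc + i0 + 1 ≤ a → a ≤ m → ∃ b : ℤ, b < 0 ∧ ((a : ℤ), b) ∈ s ∧
      spmSharp n s a = 2 * n + 1 - (-b).toNat ∧ n + 1 - j0 ≤ (-b).toNat ∧
      (-b).toNat ≤ n ∧ 1 ≤ (-b).toNat := by
    intro a h1 h2
    have haB : a ∈ B := (memB a).mpr ⟨by omega, h2⟩
    obtain ⟨haI, b, h0, hmem⟩ := Finset.mem_filter.mp haB
    obtain ⟨hv1, hv2⟩ := sharp_val_neg a b h0 hmem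
    have hb2 := bnd2o hs hmem
    have hbN : (-b).toNat ∈ Nn := by
      refine Finset.mem_filter.mpr ⟨Finset.mem_Icc.mpr ⟨by omega, by omega⟩,
        -(a : ℤ), by omega, ?_⟩
      have hcast : (((-b).toNat : ℕ) : ℤ) = -b := Int.toNat_of_nonneg (by omega)
      rw [hcast]
      exact neg_mem hs hmem
    rw [hN, Finset.mem_Icc] at hbN
    exact ⟨b, h0, hmem, hv1, hbN.1, by omega, by omega⟩
  have strictB : ∀ a : ℕ, zc + i0 + 1 ≤ a → a + 1 ≤ m →
      spmSharp n s a < spmSharp n s (a + 1) := by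
    intro a h1 h2
    obtain ⟨b, h0, hmem, hv, _, hb2, hb3⟩ := hB a h1 (by omega)
    obtain ⟨b', h0', hmem', hv', _, hb2', hb3'⟩ := hB (a + 1) (by omega) (by omega)
    have hle := ha a (by omega) (by omega)
    rcases eq_or_lt_of_le hle with he | h
    · exfalso
      have hbb : b = b' := by omega
      rw [hbb] at hmem
      have := uniq2 hs hmem hmem'
      omega
    · exact h
  have keyB : ∀ u : ℕ, 1 ≤ u → u ≤ j0 →
      (((zc + i0 + u : ℕ) : ℤ), -((n : ℤ) - (u : ℤ) + 1)) ∈ s := by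
    have lower : ∀ u : ℕ, 1 ≤ u → u ≤ j0 → n + u ≤ spmSharp n s (zc + i0 + u) := by
      intro u
      induction u with
      | zero => omega
      | succ u ih =>
        intro _ hui
        rcases Nat.eq_zero_or_pos u with rfl | hpos
        · obtain ⟨b, h0, hmem, hv, _, hb2, hb3⟩ := hB (zc + i0 + 1) le_rfl (by omega)
          show n + (0 + 1) ≤ spmSharp n s (zc + i0 + 1)
          omega
        · have h1 := ih (by omega) (by omega)
          have h2 := strictB (zc + i0 + u) (by omega) (by omega)
          show n + (u + 1) ≤ spmSharp n s (zc + i0 + u + 1)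
          omega
    have upper : ∀ d u : ℕ, 1 ≤ u → u + d = j0 →
        spmSharp n s (zc + i0 + u) + d ≤ n + j0 := by
      intro d
      induction d with
      | zero =>
        intro u h1 h2
        obtain ⟨b, _, _, hv, hb1, hb2, hb3⟩ := hB (zc + i0 + u) (by omega) (by omega)
        omega
      | succ d ih =>
        intro u h1 h2
        have h3 := ih (u + 1) (by omega) (by omega)
        have h3' : spmSharp n s (zc + i0 + u + 1) + d ≤ n + j0 := h3
        have h4 := strictB (zc + i0 + u) (by omega) (by omega)
        omega
    intro u h1 h2
    obtain ⟨b, h0, hmem, hv, hb1, hb2, hb3⟩ := hB (zc + i0 + u) (by omega) (by omega)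
    have hl := lower u h1 h2
    have hu := upper (j0 - u) u h1 (by omega)
    have hbb : b = -((n : ℤ) - (u : ℤ) + 1) := by omega
    rw [hbb] at hmem
    exact hmem
  -- conclusion
  refine ⟨i0, j0, by omega, hijn, ?_⟩
  have signeg : ∀ p : ℤ × ℤ, p ∈ sigmaIJ m n i0 j0 → (-p.1, -p.2) ∈ sigmaIJ m n i0 j0 := by
    intro p hp
    rcases mem_sigmaIJ.mp hp with ⟨t, ht, he⟩ | ⟨u, hu, he⟩ | ⟨t, ht, he⟩ | ⟨u, hu, he⟩
    · exact mem_sigmaIJ.mpr (Or.inr (Or.inr (Or.inl ⟨t, ht, by rw [← he]⟩)))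
    · exact mem_sigmaIJ.mpr (Or.inr (Or.inr (Or.inr ⟨u, hu, by rw [← he]; simp⟩)))
    · exact mem_sigmaIJ.mpr (Or.inl ⟨t, ht, by rw [← he]; simp⟩)
    · exact mem_sigmaIJ.mpr (Or.inr (Or.inl ⟨u, hu, by rw [← he]; simp⟩))
  have hposmem : ∀ a b : ℤ, 0 < a → (a, b) ∈ s → (a, b) ∈ sigmaIJ m n i0 j0 := by
    intro a b hpos hmem
    have hb1 := bnd1o hs hmem
    obtain ⟨a0, rfl⟩ : ∃ a0 : ℕ, a = (a0 : ℤ) := ⟨a.toNat, by omega⟩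
    rcases lt_trichotomy b 0 with hbneg | hb0 | hbpos
    · have haB : a0 ∈ B := Finset.mem_filter.mpr
        ⟨Finset.mem_Icc.mpr ⟨by omega, by omega⟩, b, hbneg, hmem⟩
      rw [memB] at haB
      have hk := keyB (a0 - (zc + i0)) (by omega) (by omega)
      have hcast : ((zc + i0 + (a0 - (zc + i0)) : ℕ) : ℤ) = (a0 : ℤ) := by omega
      rw [hcast] at hk
      have hbval : b = -((n : ℤ) - ((a0 - (zc + i0) : ℕ) : ℤ) + 1) := uniq1 hs hmem hk
      rw [hbval]
      exact mem_sigmaIJ.mpr (Or.inr (Or.inl ⟨a0 - (zc + i0), ⟨by omega, by omega⟩,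
        by simp only [Prod.mk.injEq, and_true, true_and]; omega⟩))
    · exfalso; have h2 := bnd2 hs hmem; rw [hb0] at h2; simp at h2
    · have haA : a0 ∈ A := Finset.mem_filter.mpr
        ⟨Finset.mem_Icc.mpr ⟨by omega, by omega⟩, b, hbpos, hmem⟩
      rw [memA] at haA
      have hk := keyA (a0 - zc) (by omega) (by omega)
      have hcast : ((zc + (a0 - zc) : ℕ) : ℤ) = (a0 : ℤ) := by omega
      rw [hcast] at hk
      have hbval : b = ((a0 - zc : ℕ) : ℤ) := uniq1 hs hmem hk
      rw [hbval]
      exact mem_sigmaIJ.mpr (Or.inl ⟨a0 - zc, ⟨by omega, by omega⟩,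
        by simp only [Prod.mk.injEq, and_true, true_and]; omega⟩)
  refine Finset.ext fun p => ⟨fun hp => ?_, fun hp => ?_⟩
  · rcases lt_trichotomy p.1 0 with h | h | h
    · have h2 := neg_mem hs (show (p.1, p.2) ∈ s from hp)
      have h3 := hposmem (-p.1) (-p.2) (by omega) h2
      have h4 := signeg _ h3
      simpa using h4
    · exfalso
      have h2 := bnd1 hs (show (p.1, p.2) ∈ s from hp)
      rw [h] at h2; simp at h2
    · exact hposmem p.1 p.2 h hp
  · rcases mem_sigmaIJ.mp hp with ⟨t, ht, he⟩ | ⟨u, hu, he⟩ | ⟨t, ht, he⟩ | ⟨u, hu, he⟩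
    · have hk := keyA t ht.1 ht.2
      have hcast : ((zc + t : ℕ) : ℤ) = (m : ℤ) - ((i0 : ℤ) + (j0 : ℤ)) + (t : ℤ) := by omega
      rw [hcast] at hk
      rw [← he]
      exact hk
    · have hk := keyB u hu.1 hu.2
      have hcast : ((zc + i0 + u : ℕ) : ℤ) =
          (m : ℤ) - ((i0 : ℤ) + (j0 : ℤ)) + (i0 : ℤ) + (u : ℤ) := by omega
      rw [hcast] at hk
      rw [← he]
      exact hk
    · have hk := neg_mem hs (keyA t ht.1 ht.2)
      have hcast : -((zc + t : ℕ) : ℤ) = -((m : ℤ) - ((i0 : ℤ) + (j0 : ℤ)) + (t : ℤ)) := by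
        omega
      rw [hcast] at hk
      rw [← he]
      exact hk
    · have hk := neg_mem hs (keyB u hu.1 hu.2)
      have hcast : -((zc + i0 + u : ℕ) : ℤ) =
          -((m : ℤ) - ((i0 : ℤ) + (j0 : ℤ)) + (i0 : ℤ) + (u : ℤ)) := by omega
      have hcast2 : - -((n : ℤ) - (u : ℤ) + 1) = (n : ℤ) - (u : ℤ) + 1 := by omega
      rw [hcast, hcast2] at hk
      rw [← he]
      exact hk

end Forward

/-- A signed partial matching `σ ∈ SPM(m,n)` satisfies (a) `σ†` is `≤_SPM`-monotone and
(b) `σ_†` is `≤_SPM`-monotone iff `σ = σ_{i,j}` for some `i, j ≥ 0` with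
`i + j ≤ min(m,n)`. -/
theorem spm_monotone_iff_sigmaIJ (m n : ℕ) (hm : 1 ≤ m) (hn : 1 ≤ n)
    (s : Finset (ℤ × ℤ)) (hs : IsSignedPM m n s) :
    ((∀ i : ℕ, 1 ≤ i → i + 1 ≤ m → spmSharp n s i ≤ spmSharp n s (i + 1)) ∧
     (∀ j : ℕ, 1 ≤ j → j + 1 ≤ n → spmDag m s j ≤ spmDag m s (j + 1))) ↔
    ∃ i j : ℕ, i + j ≤ m ∧ i + j ≤ n ∧ s = sigmaIJ m n i j := by
  
  constructor
  · rintro ⟨hA, hB⟩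
    exact forward_dir hs hA hB
  · rintro ⟨i, j, hm', hn', rfl⟩
    exact reverse_dir hs hm' hn'
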